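/- Let g : (0,∞) → ℝ be continuous and satisfy |g(x)| ≤ C₀·x for all x ∈ (0,1] and some C₀ > 0. Then the function u(y) = Λφ(y)·∫₀^y g(x)Γ(x) x dx − Γ(y)·∫₀^y g(x)Λφ(x) x dx is well defined and twice continuously differentiable on (0,∞), and satisfies Hu = g on (0,∞) (variation-of-parameters representation of the inverse of H). -/

import Mathlib

/-!
`Λφ` solves `H Λφ = 0`, and by reduction of order so does `Γ = Λφ · ∫₁^y dx / (x Λφ²)`, with
Wronskian `y (Λφ Γ' - Λφ' Γ) = 1`. For `u = Λφ A - Γ B` with `A' = g Γ y`, `B' = g Λφ y`, the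
terms containing `A'`, `B'` cancel in `u'` and recombine through the Wronskian to `-g` in `u''`,
so `H u = A · H Λφ - B · H Γ + g = g`. The integrals converge at `0` because `|Γ x| ≤ 2 / x²` and
`0 < Λφ x ≤ 2 x` for `0 < x ≤ 1`, against `|g x| ≤ C₀ x`.
-/

open MeasureTheory Real Set

noncomputable section

/-- `Z(y) = (1-y²)/(1+y²)`. -/
def Zfun (y : ℝ) : ℝ := (1 - y ^ 2) / (1 + y ^ 2)

/-- `Λφ(y) = 2y/(1+y²)`. -/
def Lphi (y : ℝ) : ℝ := 2 * y / (1 + y ^ 2)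

/-- `V(y) = (y⁴-6y²+1)/(1+y²)²`. -/
def Vfun (y : ℝ) : ℝ := (y ^ 4 - 6 * y ^ 2 + 1) / (1 + y ^ 2) ^ 2

/-- The linearized Hamiltonian `Hu = -u'' - u'/y + (V/y²) u`. -/
def Hop (u : ℝ → ℝ) (y : ℝ) : ℝ :=
  -(deriv (deriv u) y) - deriv u y / y + Vfun y / y ^ 2 * u y

/-- `Γ(y) = Λφ(y)·∫₁^y dx/(x·Λφ(x)²)`, the singular element of the kernel of `H`. -/
def Gam (y : ℝ) : ℝ := Lphi y * ∫ x in (1:ℝ)..y, 1 / (x * (Lphi x) ^ 2)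

open Topology

theorem deriv_deriv_eq_of_hasDerivAt {s : Set ℝ} {u u₁ u₂ : ℝ → ℝ} (hs : IsOpen s)
    (hu : ∀ y ∈ s, HasDerivAt u (u₁ y) y) (hu₁ : ∀ y ∈ s, HasDerivAt u₁ (u₂ y) y) {y : ℝ}
    (hy : y ∈ s) : deriv (deriv u) y = u₂ y := by
  have h : deriv u =ᶠ[𝓝 y] u₁ := by
    filter_upwards [hs.mem_nhds hy] with z hz using (hu z hz).deriv
  rw [h.deriv_eq, (hu₁ y hy).deriv]

theorem contDiffOn_two_of_hasDerivAt {s : Set ℝ} {u u₁ u₂ : ℝ → ℝ} (hs : IsOpen s)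
    (hu : ∀ y ∈ s, HasDerivAt u (u₁ y) y) (hu₁ : ∀ y ∈ s, HasDerivAt u₁ (u₂ y) y)
    (hu₂ : ContinuousOn u₂ s) : ContDiffOn ℝ 2 u s := by
  rw [show (2 : WithTop ℕ∞) = 1 + 1 from rfl, contDiffOn_succ_iff_deriv_of_isOpen hs]
  refine ⟨fun y hy => (hu y hy).differentiableAt.differentiableWithinAt, by simp, ?_⟩
  refine ContDiffOn.congr ?_ fun y hy => (hu y hy).deriv
  rw [show (1 : WithTop ℕ∞) = 0 + 1 from rfl, contDiffOn_succ_iff_deriv_of_isOpen hs]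
  refine ⟨fun y hy => (hu₁ y hy).differentiableAt.differentiableWithinAt, by simp, ?_⟩
  exact contDiffOn_zero.2 (hu₂.congr fun y hy => (hu₁ y hy).deriv)

structure IsRadialKernel (Q : ℝ → ℝ) (s : Set ℝ) (φ φ₁ φ₂ : ℝ → ℝ) : Prop where
  hasDerivAt : ∀ y ∈ s, HasDerivAt φ (φ₁ y) y
  hasDerivAt_deriv : ∀ y ∈ s, HasDerivAt φ₁ (φ₂ y) y
  continuousOn_deriv2 : ContinuousOn φ₂ s
  eq_zero : ∀ y ∈ s, -φ₂ y - φ₁ y / y + Q y * φ y = 0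

namespace IsRadialKernel

variable {Q : ℝ → ℝ} {s : Set ℝ} {φ φ₁ φ₂ : ℝ → ℝ}

theorem continuousOn (h : IsRadialKernel Q s φ φ₁ φ₂) : ContinuousOn φ s :=
  fun y hy => (h.hasDerivAt y hy).continuousAt.continuousWithinAt

theorem reductionOfOrder (h : IsRadialKernel Q s φ φ₁ φ₂) {I : ℝ → ℝ}
    (hs : ∀ y ∈ s, y ≠ 0 ∧ φ y ≠ 0) (hI : ∀ y ∈ s, HasDerivAt I (1 / (y * φ y ^ 2)) y) :
    IsRadialKernel Q s (fun y => φ y * I y) (fun y => φ₁ y * I y + 1 / (y * φ y))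
      (fun y => φ₂ y * I y - 1 / (y ^ 2 * φ y)) ∧
    ∀ y ∈ s, y * (φ y * (φ₁ y * I y + 1 / (y * φ y)) - φ₁ y * (φ y * I y)) = 1 := by
  have hIc : ContinuousOn I s := fun y hy => (hI y hy).continuousAt.continuousWithinAt
  refine ⟨⟨fun y hy => ?_, fun y hy => ?_, ?_, fun y hy => ?_⟩, fun y hy => ?_⟩
  · refine ((h.hasDerivAt y hy).mul (hI y hy)).congr_deriv ?_
    field_simp [(hs y hy).2]
  · obtain ⟨hy0, hφ0⟩ := hs y hy
    have hinv := (hasDerivAt_const y (1 : ℝ)).div ((hasDerivAt_id' y).mul (h.hasDerivAt y hy))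
      (mul_ne_zero hy0 hφ0)
    refine (((h.hasDerivAt_deriv y hy).mul (hI y hy)).add hinv).congr_deriv ?_
    simp only [Pi.mul_apply]
    field_simp
    ring
  · refine (h.continuousOn_deriv2.mul hIc).sub (continuousOn_const.div
      ((continuousOn_id.pow 2).mul h.continuousOn) fun y hy => ?_)
    simp [(hs y hy).1, (hs y hy).2]
  · linear_combination I y * h.eq_zero y hy
  · field_simp [(hs y hy).1, (hs y hy).2]
    ring

theorem variationOfParameters {ψ ψ₁ ψ₂ g A B : ℝ → ℝ} (hs : IsOpen s)
    (hφ : IsRadialKernel Q s φ φ₁ φ₂) (hψ : IsRadialKernel Q s ψ ψ₁ ψ₂)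
    (hW : ∀ y ∈ s, y * (φ y * ψ₁ y - φ₁ y * ψ y) = 1) (hg : ContinuousOn g s)
    (hA : ∀ y ∈ s, HasDerivAt A (g y * ψ y * y) y) (hB : ∀ y ∈ s, HasDerivAt B (g y * φ y * y) y) :
    ContDiffOn ℝ 2 (fun y => φ y * A y - ψ y * B y) s ∧
    ∀ y ∈ s, -deriv (deriv fun y => φ y * A y - ψ y * B y) y
      - deriv (fun y => φ y * A y - ψ y * B y) y / y
      + Q y * (φ y * A y - ψ y * B y) = g y := by
  have hu : ∀ y ∈ s, HasDerivAt (fun y => φ y * A y - ψ y * B y) (φ₁ y * A y - ψ₁ y * B y) y :=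
    fun y hy => (((hφ.hasDerivAt y hy).mul (hA y hy)).sub
      ((hψ.hasDerivAt y hy).mul (hB y hy))).congr_deriv (by ring)
  have hu₁ : ∀ y ∈ s, HasDerivAt (fun y => φ₁ y * A y - ψ₁ y * B y)
      (φ₂ y * A y - ψ₂ y * B y - g y) y :=
    fun y hy => (((hφ.hasDerivAt_deriv y hy).mul (hA y hy)).sub
      ((hψ.hasDerivAt_deriv y hy).mul (hB y hy))).congr_deriv
        (by linear_combination (-g y) * hW y hy)
  have hAc : ContinuousOn A s := fun y hy => (hA y hy).continuousAt.continuousWithinAt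
  have hBc : ContinuousOn B s := fun y hy => (hB y hy).continuousAt.continuousWithinAt
  refine ⟨contDiffOn_two_of_hasDerivAt hs hu hu₁
    (((hφ.continuousOn_deriv2.mul hAc).sub (hψ.continuousOn_deriv2.mul hBc)).sub hg),
    fun y hy => ?_⟩
  rw [deriv_deriv_eq_of_hasDerivAt hs hu hu₁ hy, (hu y hy).deriv]
  linear_combination A y * hφ.eq_zero y hy - B y * hψ.eq_zero y hy

end IsRadialKernel

theorem intervalIntegrable_zero_of_abs_le {f : ℝ → ℝ} (hf : ContinuousOn f (Ioi 0)) {M : ℝ}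
    (hM : ∀ x ∈ Ioc (0 : ℝ) 1, |f x| ≤ M) {y : ℝ} (hy : 0 < y) :
    IntervalIntegrable f volume 0 y := by
  have h01 : IntervalIntegrable f volume 0 1 := by
    rw [intervalIntegrable_iff_integrableOn_Ioc_of_le zero_le_one]
    refine ⟨(hf.mono fun x hx => hx.1).aestronglyMeasurable measurableSet_Ioc,
      HasFiniteIntegral.restrict_of_bounded (C := M) measure_Ioc_lt_top ?_⟩
    filter_upwards [ae_restrict_mem measurableSet_Ioc] with x hx using hM x hx
  rcases le_or_gt y 1 with hy1 | hy1
  · exact h01.mono_set (uIcc_subset_uIcc_left (by simp [hy.le, hy1]))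
  · refine h01.trans (hf.mono fun x hx => ?_).intervalIntegrable
    rw [uIcc_of_le hy1.le] at hx
    exact one_pos.trans_le hx.1

theorem hasDerivAt_integral_of_continuousOn {f : ℝ → ℝ} {s : Set ℝ} (hs : IsOpen s)
    (hf : ContinuousOn f s) {a y : ℝ} (hy : y ∈ s) (hint : IntervalIntegrable f volume a y) :
    HasDerivAt (fun y => ∫ x in a..y, f x) (f y) y :=
  intervalIntegral.integral_hasDerivAt_right hint
    (hf.stronglyMeasurableAtFilter hs y hy) (hf.continuousAt (hs.mem_nhds hy))

def Lphi' (y : ℝ) : ℝ := 2 * (1 - y ^ 2) / (1 + y ^ 2) ^ 2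

def Lphi'' (y : ℝ) : ℝ := (4 * y ^ 3 - 12 * y) / (1 + y ^ 2) ^ 3

theorem hasDerivAt_Lphi (y : ℝ) : HasDerivAt Lphi (Lphi' y) y := by
  have h := ((hasDerivAt_id' y).const_mul 2).div (((hasDerivAt_id' y).pow 2).const_add 1)
    (by positivity : (1 + y ^ 2 : ℝ) ≠ 0)
  refine h.congr_deriv ?_
  simp only [Lphi', Pi.pow_apply]
  field_simp
  ring

theorem hasDerivAt_Lphi' (y : ℝ) : HasDerivAt Lphi' (Lphi'' y) y := by
  have h := ((((hasDerivAt_id' y).pow 2).const_sub 1).const_mul 2).div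
    ((((hasDerivAt_id' y).pow 2).const_add 1).pow 2) (by positivity : ((1 + y ^ 2) ^ 2 : ℝ) ≠ 0)
  refine h.congr_deriv ?_
  simp only [Lphi'', Pi.pow_apply]
  field_simp
  ring

theorem isRadialKernel_Lphi :
    IsRadialKernel (fun y => Vfun y / y ^ 2) (Ioi 0) Lphi Lphi' Lphi'' where
  hasDerivAt y _ := hasDerivAt_Lphi y
  hasDerivAt_deriv y _ := hasDerivAt_Lphi' y
  continuousOn_deriv2 := by
    refine (Continuous.div (by fun_prop) (by fun_prop) fun y => ?_).continuousOn
    positivity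
  eq_zero y hy := by
    have : y ≠ 0 := ne_of_gt hy
    simp only [Lphi'', Lphi', Vfun, Lphi]
    field_simp
    ring

theorem Lphi_pos {y : ℝ} (hy : 0 < y) : 0 < Lphi y := by
  unfold Lphi; positivity

theorem Lphi_le {y : ℝ} (hy : 0 ≤ y) : Lphi y ≤ 2 * y := by
  unfold Lphi
  rw [div_le_iff₀ (by positivity)]
  nlinarith [mul_nonneg hy (sq_nonneg y)]

theorem continuous_Lphi : Continuous Lphi :=
  continuous_iff_continuousAt.2 fun y => (hasDerivAt_Lphi y).continuousAt

theorem continuousOn_inv_mul_Lphi_sq : ContinuousOn (fun x => 1 / (x * Lphi x ^ 2)) (Ioi 0) :=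
  continuousOn_const.div (continuousOn_id.mul (continuous_Lphi.continuousOn.pow 2))
    fun _ hx => mul_ne_zero (ne_of_gt hx) (pow_ne_zero 2 (Lphi_pos hx).ne')

theorem hasDerivAt_integral_inv_mul_Lphi_sq {y : ℝ} (hy : 0 < y) :
    HasDerivAt (fun y => ∫ x in (1 : ℝ)..y, 1 / (x * Lphi x ^ 2)) (1 / (y * Lphi y ^ 2)) y :=
  hasDerivAt_integral_of_continuousOn isOpen_Ioi continuousOn_inv_mul_Lphi_sq hy
    (continuousOn_inv_mul_Lphi_sq.mono fun x hx => lt_of_lt_of_le (lt_min one_pos hy)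
      (by simpa using hx.1)).intervalIntegrable

theorem abs_integral_inv_mul_Lphi_sq_le {x : ℝ} (hx : 0 < x) (hx1 : x ≤ 1) :
    |∫ t in (1 : ℝ)..x, 1 / (t * Lphi t ^ 2)| ≤ 1 / x ^ 3 := by
  have hbound : ∀ t ∈ uIoc (1 : ℝ) x, ‖1 / (t * Lphi t ^ 2)‖ ≤ 1 / x ^ 3 := by
    intro t ht
    rw [uIoc_of_ge hx1] at ht
    have ht0 : 0 < t := hx.trans ht.1
    have hformula : 1 / (t * Lphi t ^ 2) = (1 + t ^ 2) ^ 2 / 4 / t ^ 3 := by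
      unfold Lphi
      field_simp
      ring
    rw [Real.norm_eq_abs, hformula, abs_of_nonneg (by positivity)]
    gcongr
    · have : t ^ 2 ≤ 1 := by nlinarith [ht.2]
      rw [div_le_one four_pos]
      nlinarith
    · exact ht.1.le
  calc |∫ t in (1 : ℝ)..x, 1 / (t * Lphi t ^ 2)|
      ≤ 1 / x ^ 3 * |x - 1| := intervalIntegral.norm_integral_le_of_norm_le_const hbound
    _ ≤ 1 / x ^ 3 * 1 := by
        gcongr
        rw [abs_le]
        constructor <;> linarith
    _ = 1 / x ^ 3 := mul_one _

theorem abs_Gam_le {x : ℝ} (hx : 0 < x) (hx1 : x ≤ 1) : |Gam x| ≤ 2 / x ^ 2 := by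
  rw [Gam, abs_mul, abs_of_pos (Lphi_pos hx)]
  calc Lphi x * |∫ t in (1 : ℝ)..x, 1 / (t * Lphi t ^ 2)| ≤ 2 * x * (1 / x ^ 3) :=
        mul_le_mul (Lphi_le hx.le) (abs_integral_inv_mul_Lphi_sq_le hx hx1) (abs_nonneg _)
          (by positivity)
    _ = 2 / x ^ 2 := by field_simp

theorem abs_mul_Gam_mul_self_le {a c x : ℝ} (hx : 0 < x) (hx1 : x ≤ 1) (ha : |a| ≤ c * x) :
    |a * Gam x * x| ≤ 2 * c := by
  have hc : 0 ≤ c * x := (abs_nonneg a).trans ha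
  calc |a * Gam x * x| = |a| * |Gam x| * x := by rw [abs_mul, abs_mul, abs_of_pos hx]
    _ ≤ c * x * (2 / x ^ 2) * x := by gcongr; exact abs_Gam_le hx hx1
    _ = 2 * c := by field_simp

theorem abs_mul_Lphi_mul_self_le {a c x : ℝ} (hx : 0 < x) (hx1 : x ≤ 1) (ha : |a| ≤ c * x) :
    |a * Lphi x * x| ≤ 2 * c := by
  have hc : 0 ≤ c := nonneg_of_mul_nonneg_left ((abs_nonneg a).trans ha) hx
  calc |a * Lphi x * x| = |a| * Lphi x * x := by
        rw [abs_mul, abs_mul, abs_of_pos hx, abs_of_pos (Lphi_pos hx)]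
    _ ≤ c * x * (2 * x) * x := by gcongr; exacts [(Lphi_pos hx).le, Lphi_le hx.le]
    _ = 2 * c * x ^ 3 := by ring
    _ ≤ 2 * c := mul_le_of_le_one_right (by positivity) (pow_le_one₀ hx.le hx1)

theorem variation_of_parameters_general (g : ℝ → ℝ) (C₀ : ℝ)
    (hg : ContinuousOn g (Set.Ioi 0))
    (hgb : ∀ x : ℝ, 0 < x → x ≤ 1 → |g x| ≤ C₀ * x) :
    (∀ y : ℝ, 0 < y →
      IntervalIntegrable (fun x => g x * Gam x * x) volume 0 y ∧
      IntervalIntegrable (fun x => g x * Lphi x * x) volume 0 y) ∧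
    ContDiffOn ℝ 2
      (fun y => Lphi y * (∫ x in (0:ℝ)..y, g x * Gam x * x)
          - Gam y * (∫ x in (0:ℝ)..y, g x * Lphi x * x)) (Set.Ioi 0) ∧
    (∀ y : ℝ, 0 < y →
      Hop (fun y => Lphi y * (∫ x in (0:ℝ)..y, g x * Gam x * x)
          - Gam y * (∫ x in (0:ℝ)..y, g x * Lphi x * x)) y = g y) := by
  obtain ⟨hGam, hW⟩ := isRadialKernel_Lphi.reductionOfOrder
    (fun y hy => ⟨ne_of_gt hy, (Lphi_pos hy).ne'⟩) fun y hy => hasDerivAt_integral_inv_mul_Lphi_sq hy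
  have hf₁ : ContinuousOn (fun x => g x * Gam x * x) (Ioi 0) :=
    (hg.mul hGam.continuousOn).mul continuousOn_id
  have hf₂ : ContinuousOn (fun x => g x * Lphi x * x) (Ioi 0) :=
    (hg.mul continuous_Lphi.continuousOn).mul continuousOn_id
  have hint₁ : ∀ y : ℝ, 0 < y → IntervalIntegrable (fun x => g x * Gam x * x) volume 0 y :=
    fun _ => intervalIntegrable_zero_of_abs_le hf₁ fun x hx =>
      abs_mul_Gam_mul_self_le hx.1 hx.2 (hgb x hx.1 hx.2)
  have hint₂ : ∀ y : ℝ, 0 < y → IntervalIntegrable (fun x => g x * Lphi x * x) volume 0 y :=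
    fun _ => intervalIntegrable_zero_of_abs_le hf₂ fun x hx =>
      abs_mul_Lphi_mul_self_le hx.1 hx.2 (hgb x hx.1 hx.2)
  obtain ⟨hC2, hH⟩ := isRadialKernel_Lphi.variationOfParameters isOpen_Ioi hGam hW hg
    (fun y hy => hasDerivAt_integral_of_continuousOn isOpen_Ioi hf₁ hy (hint₁ y hy))
    (fun y hy => hasDerivAt_integral_of_continuousOn isOpen_Ioi hf₂ hy (hint₂ y hy))
  exact ⟨fun y hy => ⟨hint₁ y hy, hint₂ y hy⟩, hC2, hH⟩

/-- Variation of parameters: if `g` is continuous on `(0,∞)` with `|g(x)| ≤ C₀ x` for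
`x ∈ (0,1]`, then `u(y) = Λφ(y)·∫₀^y gΓ x dx − Γ(y)·∫₀^y gΛφ x dx` is well defined,
`C²` on `(0,∞)`, and solves `Hu = g` on `(0,∞)`. -/
theorem variation_of_parameters (g : ℝ → ℝ) (C₀ : ℝ) (hC₀ : 0 < C₀)
    (hg : ContinuousOn g (Set.Ioi 0))
    (hgb : ∀ x : ℝ, 0 < x → x ≤ 1 → |g x| ≤ C₀ * x) :
    (∀ y : ℝ, 0 < y →
      IntervalIntegrable (fun x => g x * Gam x * x) volume 0 y ∧
      IntervalIntegrable (fun x => g x * Lphi x * x) volume 0 y) ∧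
    ContDiffOn ℝ 2
      (fun y => Lphi y * (∫ x in (0:ℝ)..y, g x * Gam x * x)
          - Gam y * (∫ x in (0:ℝ)..y, g x * Lphi x * x)) (Set.Ioi 0) ∧
    (∀ y : ℝ, 0 < y →
      Hop (fun y => Lphi y * (∫ x in (0:ℝ)..y, g x * Gam x * x)
          - Gam y * (∫ x in (0:ℝ)..y, g x * Lphi x * x)) y = g y) :=
  variation_of_parameters_general g C₀ hg hgb
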